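/- arXiv:1311.7522 — 4 statements merged into one kernel-verified Lean document; each statement's English description precedes it below -/
import Mathlib

section
/- Let n, c ≥ 1 and let F : ℂ^n × ℂ^n × ℂ^c → ℂ be holomorphic in a neighborhood of the origin (variables (z, ζ, ν)). Then F(z, conj z, u) is a real number for all z in a neighborhood of 0 in ℂ^n and all u in a neighborhood of 0 in ℝ^c if and only if conj(F(z, ζ, ν)) = F(conj ζ, conj z, conj ν) for all (z, ζ, ν) in a neighborhood of the origin of ℂ^n × ℂ^n × ℂ^c. -/
open Complex Filter Topology ComplexConjugate Metric

/-!
The map `τ (z, ζ, ν) = (conj ζ, conj z, conj ν)` is a conjugate-linear involution whose fixed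
points are exactly the points `(z, conj z, u)` with `u` real, so one direction is immediate.
For the other, write a point `p` near `0` as `a + I • b` with `a`, `b` fixed by `τ`, so that
`τ p = a - I • b`. On the complex line `t ↦ a + t • b` the function `F` is real for real `t`, so
by the one-variable Schwarz reflection principle (the identity theorem applied to
`t ↦ conj (F (a + conj t • b))`) we get `conj (F (a + t • b)) = F (a + conj t • b)` on the unit
disc, and `t = I` gives the claim.
-/

theorem AnalyticAt.conj_comp_conj {g : ℂ → ℂ} {z : ℂ} (hg : AnalyticAt ℂ g (conj z)) :
    AnalyticAt ℂ (fun t => conj (g (conj t))) z := by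
  have hnhds : {t | AnalyticAt ℂ g (conj t)} ∈ 𝓝 z :=
    (continuous_conj.tendsto z).eventually hg.eventually_analyticAt
  refine DifferentiableOn.analyticAt (fun t ht => ?_) hnhds
  have := (ht.differentiableAt : DifferentiableAt ℂ g (conj t)).conj_conj
  simpa [Function.comp_def] using this.differentiableWithinAt

theorem tendsto_ofReal_nhdsNE (x : ℝ) : Tendsto ((↑) : ℝ → ℂ) (𝓝[≠] x) (𝓝[≠] (x : ℂ)) :=
  tendsto_nhdsWithin_of_tendsto_nhds_of_eventually_within _
    (continuous_ofReal.continuousAt.mono_left nhdsWithin_le_nhds)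
    (eventually_nhdsWithin_of_forall fun _ hs => by simpa using hs)

theorem AnalyticOnNhd.conj_apply_eq_apply_conj {g : ℂ → ℂ} {U : Set ℂ}
    (hg : AnalyticOnNhd ℂ g U) (hU : IsPreconnected U) (hUconj : ∀ t ∈ U, conj t ∈ U)
    {x : ℝ} (hx : (x : ℂ) ∈ U) (hreal : ∀ᶠ s : ℝ in 𝓝 x, conj (g s) = g s) :
    ∀ t ∈ U, conj (g t) = g (conj t) := by
  have hreflect : AnalyticOnNhd ℂ (fun t => conj (g (conj t))) U :=
    fun t ht => (hg _ (hUconj t ht)).conj_comp_conj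
  have hfreq : ∃ᶠ t in 𝓝[≠] (x : ℂ), conj (g (conj t)) = g t :=
    (tendsto_ofReal_nhdsNE x).frequently
      ((hreal.filter_mono nhdsWithin_le_nhds).mono fun s hs => by simpa using hs).frequently
  intro t ht
  simpa using hreflect.eqOn_of_preconnected_of_frequently_eq hg hU hx hfreq (hUconj t ht)

section RealForm

variable {E : Type*} [NormedAddCommGroup E] [NormedSpace ℂ E] (τ : E →L⋆[ℂ] E)

theorem map_add_smul_of_fixed {a b : E} (ha : τ a = a) (hb : τ b = b) (t : ℂ) :
    τ (a + t • b) = a + conj t • b := by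
  rw [map_add, map_smulₛₗ, ha, hb]

theorem conj_apply_eq_apply_of_fixed_line {U : Set E} (hU : IsOpen U) {F : E → ℂ}
    (hF : AnalyticOnNhd ℂ F U) (hreal : ∀ y ∈ U, τ y = y → conj (F y) = F y)
    {a b : E} (ha : τ a = a) (hb : τ b = b)
    (hline : ∀ t ∈ closedBall (0 : ℂ) 1, a + t • b ∈ U) :
    conj (F (a + I • b)) = F (τ (a + I • b)) := by
  have hg : AnalyticOnNhd ℂ (fun t : ℂ => F (a + t • b)) (closedBall 0 1) := fun t ht =>
    (hF _ (hline t ht)).comp_of_eq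
      (analyticAt_const.add (analyticAt_id.smul analyticAt_const)) rfl
  have hgreal : ∀ᶠ s : ℝ in 𝓝 0, conj (F (a + (s : ℂ) • b)) = F (a + (s : ℂ) • b) := by
    have hcont : Continuous fun s : ℝ => a + (s : ℂ) • b := by fun_prop
    have ha_mem : a ∈ U := by simpa using hline 0 (by simp)
    filter_upwards [hcont.continuousAt.preimage_mem_nhds (hU.mem_nhds (by simpa using ha_mem))]
      with s hs
    exact hreal _ hs (by rw [map_add_smul_of_fixed τ ha hb, conj_ofReal])
  rw [map_add_smul_of_fixed τ ha hb]
  exact hg.conj_apply_eq_apply_conj (convex_closedBall 0 1).isPreconnected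
    (fun t ht => by simpa using ht) (by simp) hgreal I (by simp)

variable {τ}

theorem eventually_conj_apply_eq_apply_of_fixedPoints (hτ : Function.Involutive τ)
    {F : E → ℂ} (hF : AnalyticAt ℂ F 0) (hreal : ∀ᶠ p in 𝓝 0, τ p = p → conj (F p) = F p) :
    ∀ᶠ p in 𝓝 0, conj (F p) = F (τ p) := by
  obtain ⟨ε, hε, hball⟩ := eventually_nhds_iff_ball.mp (hF.eventually_analyticAt.and hreal)
  set re : E → E := fun p => (2 : ℂ)⁻¹ • (p + τ p)
  set im : E → E := fun p => (2 : ℂ)⁻¹ • (I • (τ p - p))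
  have hre_fixed (p : E) : τ (re p) = re p := by
    simp only [re, map_smulₛₗ, map_add, hτ p, map_inv₀, map_ofNat]
    abel_nf
  have him_fixed (p : E) : τ (im p) = im p := by
    simp only [im, map_smulₛₗ, map_sub, hτ p, map_inv₀, map_ofNat, conj_I]
    rw [neg_smul, ← smul_neg, neg_sub]
  have hdecomp (p : E) : re p + I • im p = p := by
    simp only [re, im, smul_comm I (2⁻¹ : ℂ), smul_smul I I, I_mul_I]
    module
  have hsmall (f : E → E) (hf : Continuous f) (h0 : f 0 = 0) :
      ∀ᶠ p in 𝓝 0, ‖f p‖ < ε / 2 := by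
    simpa using hf.tendsto' 0 0 h0 |>.eventually (ball_mem_nhds 0 (half_pos hε))
  filter_upwards [hsmall re (by fun_prop) (by simp [re]), hsmall im (by fun_prop) (by simp [im])]
    with p hre him
  have hline (t : ℂ) (ht : t ∈ closedBall 0 1) : re p + t • im p ∈ ball 0 ε := by
    rw [mem_closedBall_zero_iff] at ht
    rw [mem_ball_zero_iff]
    calc ‖re p + t • im p‖ ≤ ‖re p‖ + ‖t‖ * ‖im p‖ :=
          (norm_add_le _ _).trans_eq (by rw [norm_smul t])
      _ < ε / 2 + ε / 2 :=
        add_lt_add_of_lt_of_le hre ((mul_le_of_le_one_left (norm_nonneg _) ht).trans him.le)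
      _ = ε := add_halves ε
  rw [← hdecomp p]
  exact conj_apply_eq_apply_of_fixed_line τ isOpen_ball (fun y hy => (hball y hy).1)
    (fun y hy => (hball y hy).2) (hre_fixed p) (him_fixed p) hline

end RealForm

section SwapConj

variable {n c : ℕ}

def swapConj (n c : ℕ) :
    ((Fin n → ℂ) × (Fin n → ℂ) × (Fin c → ℂ)) →L⋆[ℂ]
      ((Fin n → ℂ) × (Fin n → ℂ) × (Fin c → ℂ)) where
  toFun p := (fun i => conj (p.2.1 i), fun i => conj (p.1 i), fun j => conj (p.2.2 j))
  map_add' p q := by ext <;> simp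
  map_smul' a p := by ext <;> simp
  cont := by fun_prop

theorem swapConj_apply (p : (Fin n → ℂ) × (Fin n → ℂ) × (Fin c → ℂ)) :
    swapConj n c p = (fun i => conj (p.2.1 i), fun i => conj (p.1 i), fun j => conj (p.2.2 j)) :=
  rfl

theorem swapConj_involutive : Function.Involutive (swapConj n c) := fun p => by
  simp [swapConj_apply]

theorem swapConj_diag (z : Fin n → ℂ) (u : Fin c → ℝ) :
    swapConj n c (z, fun i => conj (z i), fun j => (u j : ℂ)) =
      (z, fun i => conj (z i), fun j => (u j : ℂ)) := by
  simp [swapConj_apply]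

theorem eq_diag_of_swapConj_eq_self {p : (Fin n → ℂ) × (Fin n → ℂ) × (Fin c → ℂ)}
    (hp : swapConj n c p = p) :
    (p.1, fun i => conj (p.1 i), fun j => ((p.2.2 j).re : ℂ)) = p := by
  obtain ⟨z, ζ, ν⟩ := p
  simp only [swapConj_apply, Prod.mk.injEq, funext_iff] at hp
  ext i
  · rfl
  · exact hp.2.1 i
  · exact conj_eq_iff_re.mp (hp.2.2 i)

end SwapConj

theorem stmt_1_general (n c : ℕ)
    (F : ((Fin n → ℂ) × (Fin n → ℂ) × (Fin c → ℂ)) → ℂ)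
    (hF : AnalyticAt ℂ F 0) :
    (∀ᶠ zu in 𝓝 (0 : (Fin n → ℂ) × (Fin c → ℝ)),
        (F (zu.1, fun i => conj (zu.1 i), fun j => (zu.2 j : ℂ))).im = 0) ↔
      (∀ᶠ p in 𝓝 (0 : (Fin n → ℂ) × (Fin n → ℂ) × (Fin c → ℂ)),
        conj (F p) =
          F (fun i => conj (p.2.1 i), fun i => conj (p.1 i), fun j => conj (p.2.2 j))) := by
  change _ ↔ ∀ᶠ p in 𝓝 0, conj (F p) = F (swapConj n c p)
  constructor
  · intro hreal
    have hproj : Tendsto (fun p : (Fin n → ℂ) × (Fin n → ℂ) × (Fin c → ℂ) =>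
        (p.1, fun j => (p.2.2 j).re)) (𝓝 0) (𝓝 0) :=
      Continuous.tendsto' (by fun_prop) _ _ (by ext <;> simp)
    refine eventually_conj_apply_eq_apply_of_fixedPoints swapConj_involutive hF ?_
    filter_upwards [hproj.eventually hreal] with p hp hfixed
    rw [← eq_diag_of_swapConj_eq_self hfixed]
    exact conj_eq_iff_im.mpr hp
  · intro hsym
    have hdiag : Tendsto (fun zu : (Fin n → ℂ) × (Fin c → ℝ) =>
        ((zu.1, fun i => conj (zu.1 i), fun j => (zu.2 j : ℂ)) :
          (Fin n → ℂ) × (Fin n → ℂ) × (Fin c → ℂ))) (𝓝 0) (𝓝 0) :=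
      Continuous.tendsto' (by fun_prop) _ _ (by ext <;> simp)
    filter_upwards [hdiag.eventually hsym] with zu hzu
    rw [swapConj_diag] at hzu
    exact conj_eq_iff_im.mp hzu

/-- **Reality characterization.** A function `F` holomorphic near the origin of
`ℂ^n × ℂ^n × ℂ^c` (variables `(z, ζ, ν)`) takes real values at `(z, conj z, u)` for all
`z` near `0` in `ℂ^n` and all real `u` near `0` in `ℝ^c` if and only if
`conj (F (z, ζ, ν)) = F (conj ζ, conj z, conj ν)` near the origin. -/
theorem stmt_1 (n c : ℕ) (hn : 1 ≤ n) (hc : 1 ≤ c)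
    (F : ((Fin n → ℂ) × (Fin n → ℂ) × (Fin c → ℂ)) → ℂ)
    (hF : AnalyticAt ℂ F 0) :
    (∀ᶠ zu in 𝓝 (0 : (Fin n → ℂ) × (Fin c → ℝ)),
        (F (zu.1, fun i => conj (zu.1 i), fun j => (zu.2 j : ℂ))).im = 0) ↔
      (∀ᶠ p in 𝓝 (0 : (Fin n → ℂ) × (Fin n → ℂ) × (Fin c → ℂ)),
        conj (F p) =
          F (fun i => conj (p.2.1 i), fun i => conj (p.1 i), fun j => conj (p.2.2 j))) :=
  stmt_1_general n c F hF
end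

section
/- Let n, c ≥ 1 and let φ : ℂ^n × ℂ^n × ℂ^c → ℂ^c be holomorphic in a neighborhood of the origin with φ(0) = 0, Dφ(0) = 0, satisfying the reality condition conj(φ(z, ζ, ν)) = φ(conj ζ, conj z, conj ν) near the origin. Let Θ be the unique holomorphic germ at 0 with Θ(0) = 0 satisfying (Θ(z, ζ, ω) − ω)/(2i) = φ(z, ζ, (Θ(z, ζ, ω) + ω)/2) identically, and set Θ̄(ζ, z, w) := conj(Θ(conj ζ, conj z, conj w)). Then the two functional equations w = Θ(z, ζ, Θ̄(ζ, z, w)) and ω = Θ̄(ζ, z, Θ(z, ζ, ω)) hold identically for all (z, ζ, w) (respectively (z, ζ, ω)) in a neighborhood of the origin of ℂ^n × ℂ^n × ℂ^c. -/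
/-!
Write `E(z, ζ, w, ω)` for the complexified defining equation
`(w - ω) / (2i) = φ(z, ζ, (w + ω) / 2)`. Since `Dφ(0) = 0`, `φ` is `1/2`-Lipschitz near the
origin, so for fixed small `(z, ζ, ω)` the equation has at most one small solution `w`, and for
fixed small `(z, ζ, w)` at most one small solution `ω`. By definition `w = Θ(z, ζ, ω)` solves `E`;
conjugating this equation and using the reality condition of `φ` shows that `ω = Θ̄(ζ, z, w)`
solves it as well. Each of the two identities then compares two small solutions of `E`.
-/

open Complex Filter Topology ComplexConjugate
open scoped NNReal

def ComplexDefiningEq {α : Type*} {c : ℕ} (φ : α × α × (Fin c → ℂ) → (Fin c → ℂ)) (z ζ : α)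
    (w ω : Fin c → ℂ) : Prop :=
  (fun j => (w j - ω j) / (2 * I)) = φ (z, ζ, fun j => (w j + ω j) / 2)

variable {α : Type*} {n c : ℕ}

theorem tendsto_half_add {l : Filter α} {u v : α → Fin c → ℂ} (hu : Tendsto u l (𝓝 0))
    (hv : Tendsto v l (𝓝 0)) : Tendsto (fun a j => (u a j + v a j) / 2) l (𝓝 0) := by
  refine tendsto_pi_nhds.2 fun j => ?_
  simpa using ((tendsto_pi_nhds.1 hu j).add (tendsto_pi_nhds.1 hv j)).div_const 2

namespace ComplexDefiningEq

theorem neg_swap {φ : α × α × (Fin c → ℂ) → (Fin c → ℂ)} {z ζ : α} {w ω : Fin c → ℂ} :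
    ComplexDefiningEq (-φ) z ζ ω w ↔ ComplexDefiningEq φ z ζ w ω := by
  simp only [ComplexDefiningEq, funext_iff, Pi.neg_apply, add_comm (ω _)]
  refine forall_congr' fun j => ?_
  rw [← neg_sub, neg_div, neg_inj]

theorem conj_swap {φ : (Fin n → ℂ) × (Fin n → ℂ) × (Fin c → ℂ) → (Fin c → ℂ)}
    {z ζ : Fin n → ℂ} {w ω : Fin c → ℂ} (h : ComplexDefiningEq φ z ζ w ω)
    (hreal : (fun j => conj (φ (z, ζ, fun j => (w j + ω j) / 2) j)) =
      φ (fun i => conj (ζ i), fun i => conj (z i), fun j => conj ((w j + ω j) / 2))) :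
    ComplexDefiningEq φ (fun i => conj (ζ i)) (fun i => conj (z i)) (fun j => conj (ω j))
      (fun j => conj (w j)) := by
  have hmid : (fun j => (conj (ω j) + conj (w j)) / 2) = fun j => conj ((w j + ω j) / 2) := by
    ext j
    rw [map_div₀, map_add, map_ofNat, add_comm]
  unfold ComplexDefiningEq at h ⊢
  rw [hmid, ← hreal, ← h]
  ext j
  rw [map_div₀, map_sub, map_mul, map_ofNat, conj_I, ← neg_sub, neg_div, mul_neg, div_neg]

theorem left_unique {E : Type*} [NormedAddCommGroup E] {φ : E × E × (Fin c → ℂ) → (Fin c → ℂ)}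
    {K : ℝ≥0} {s : Set (E × E × (Fin c → ℂ))} (hφ : LipschitzOnWith K φ s)
    (hK : K < 1) {z ζ : E} {w w' ω : Fin c → ℂ}
    (h : ComplexDefiningEq φ z ζ w ω) (h' : ComplexDefiningEq φ z ζ w' ω)
    (hs : (z, ζ, fun j => (w j + ω j) / 2) ∈ s) (hs' : (z, ζ, fun j => (w' j + ω j) / 2) ∈ s) :
    w = w' := by
  have hquot : (fun j => (w j - ω j) / (2 * I)) - (fun j => (w' j - ω j) / (2 * I)) =
      (2 * I)⁻¹ • (w - w') := by
    ext j; simp only [Pi.sub_apply, Pi.smul_apply, smul_eq_mul]; ring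
  have hmid : ((z, ζ, fun j => (w j + ω j) / 2) : E × E × (Fin c → ℂ)) -
      (z, ζ, fun j => (w' j + ω j) / 2) = (0, 0, (2 : ℂ)⁻¹ • (w - w')) := by
    ext j <;> simp only [Prod.fst_sub, Prod.snd_sub, sub_self, Pi.sub_apply, Pi.smul_apply,
      smul_eq_mul]
    ring
  have hcontr : ‖w - w'‖ ≤ K * ‖w - w'‖ := calc
    ‖w - w'‖ = 2 * ‖(fun j => (w j - ω j) / (2 * I)) - (fun j => (w' j - ω j) / (2 * I))‖ := by
      rw [hquot, norm_smul]; simp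
    _ = 2 * ‖φ (z, ζ, fun j => (w j + ω j) / 2) - φ (z, ζ, fun j => (w' j + ω j) / 2)‖ := by
      rw [h, h']
    _ ≤ 2 * (K * ‖((z, ζ, fun j => (w j + ω j) / 2) : E × E × (Fin c → ℂ)) -
        (z, ζ, fun j => (w' j + ω j) / 2)‖) := by
      gcongr; exact hφ.norm_sub_le hs hs'
    _ = K * ‖w - w'‖ := by
      rw [hmid]
      simp only [Prod.norm_mk, norm_zero, norm_smul, norm_inv, norm_ofNat, inv_pos,
        Nat.ofNat_pos, mul_nonneg_iff_of_pos_left, norm_nonneg, sup_of_le_right]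
      ring
  have hK' : (K : ℝ) < 1 := by exact_mod_cast hK
  have hzero : ‖w - w'‖ = 0 := by nlinarith [norm_nonneg (w - w')]
  exact sub_eq_zero.1 (norm_eq_zero.1 hzero)

section StrictDeriv

variable {E : Type*} [NormedAddCommGroup E] [NormedSpace ℂ E]
  {φ : E × E × (Fin c → ℂ) → (Fin c → ℂ)}

theorem eventuallyEq_left (hφ : HasStrictFDerivAt φ (0 : E × E × (Fin c → ℂ) →L[ℂ] _) 0)
    {l : Filter α} {z ζ : α → E} {w w' ω : α → Fin c → ℂ} (hz : Tendsto z l (𝓝 0))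
    (hζ : Tendsto ζ l (𝓝 0)) (hw : Tendsto w l (𝓝 0)) (hw' : Tendsto w' l (𝓝 0))
    (hω : Tendsto ω l (𝓝 0)) (h : ∀ᶠ a in l, ComplexDefiningEq φ (z a) (ζ a) (w a) (ω a))
    (h' : ∀ᶠ a in l, ComplexDefiningEq φ (z a) (ζ a) (w' a) (ω a)) : w =ᶠ[l] w' := by
  obtain ⟨s, hs, hLip⟩ := hφ.exists_lipschitzOnWith_of_nnnorm_lt (1 / 2) (by simp)
  have hmem : ∀ {v : α → Fin c → ℂ}, Tendsto v l (𝓝 0) →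
      ∀ᶠ a in l, (z a, ζ a, fun j => (v a j + ω a j) / 2) ∈ s := fun hv =>
    (hz.prodMk_nhds (hζ.prodMk_nhds (tendsto_half_add hv hω))).eventually_mem hs
  filter_upwards [h, h', hmem hw, hmem hw'] with a ha ha' hs hs'
  exact left_unique hLip (by norm_num) ha ha' hs hs'

theorem eventuallyEq_right (hφ : HasStrictFDerivAt φ (0 : E × E × (Fin c → ℂ) →L[ℂ] _) 0)
    {l : Filter α} {z ζ : α → E} {w ω ω' : α → Fin c → ℂ} (hz : Tendsto z l (𝓝 0))
    (hζ : Tendsto ζ l (𝓝 0)) (hw : Tendsto w l (𝓝 0)) (hω : Tendsto ω l (𝓝 0))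
    (hω' : Tendsto ω' l (𝓝 0)) (h : ∀ᶠ a in l, ComplexDefiningEq φ (z a) (ζ a) (w a) (ω a))
    (h' : ∀ᶠ a in l, ComplexDefiningEq φ (z a) (ζ a) (w a) (ω' a)) : ω =ᶠ[l] ω' :=
  eventuallyEq_left (by simpa using hφ.neg) hz hζ hω hω' hw
    (h.mono fun _ => neg_swap.2) (h'.mono fun _ => neg_swap.2)

end StrictDeriv

end ComplexDefiningEq

def conjGerm (Θ : (Fin n → ℂ) × (Fin n → ℂ) × (Fin c → ℂ) → (Fin c → ℂ)) :
    (Fin n → ℂ) × (Fin n → ℂ) × (Fin c → ℂ) → (Fin c → ℂ) :=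
  fun q j => conj (Θ (fun i => conj (q.1 i), fun i => conj (q.2.1 i), fun k => conj (q.2.2 k)) j)

theorem Filter.Tendsto.conjGerm {Θ : (Fin n → ℂ) × (Fin n → ℂ) × (Fin c → ℂ) → (Fin c → ℂ)}
    (hΘ : Tendsto Θ (𝓝 0) (𝓝 0)) : Tendsto (conjGerm Θ) (𝓝 0) (𝓝 0) := by
  have hconj : Continuous fun q : (Fin n → ℂ) × (Fin n → ℂ) × (Fin c → ℂ) =>
      (fun i => conj (q.1 i), fun i => conj (q.2.1 i), fun k => conj (q.2.2 k)) := by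
    fun_prop
  have hconj' : Continuous fun v : Fin c → ℂ => fun j => conj (v j) := by fun_prop
  exact (hconj'.tendsto' 0 0 (by ext; simp)).comp (hΘ.comp (hconj.tendsto' 0 0 (by ext <;> simp)))

theorem eventually_complexDefiningEq_conjGerm
    {φ Θ : (Fin n → ℂ) × (Fin n → ℂ) × (Fin c → ℂ) → (Fin c → ℂ)}
    (hreal : ∀ᶠ p in 𝓝 (0 : (Fin n → ℂ) × (Fin n → ℂ) × (Fin c → ℂ)),
      (fun j => conj (φ p j)) =
        φ (fun i => conj (p.2.1 i), fun i => conj (p.1 i), fun j => conj (p.2.2 j)))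
    (hΘ : Tendsto Θ (𝓝 0) (𝓝 0))
    (hΘeq : ∀ᶠ p in 𝓝 0, ComplexDefiningEq φ p.1 p.2.1 (Θ p) p.2.2) :
    ∀ᶠ p in 𝓝 (0 : (Fin n → ℂ) × (Fin n → ℂ) × (Fin c → ℂ)),
      ComplexDefiningEq φ p.1 p.2.1 p.2.2 (conjGerm Θ (p.2.1, p.1, p.2.2)) := by
  set ρ : (Fin n → ℂ) × (Fin n → ℂ) × (Fin c → ℂ) → (Fin n → ℂ) × (Fin n → ℂ) × (Fin c → ℂ) :=
    fun p => (fun i => conj (p.2.1 i), fun i => conj (p.1 i), fun k => conj (p.2.2 k))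
  have hρ : Tendsto ρ (𝓝 0) (𝓝 0) := (by fun_prop : Continuous ρ).tendsto' 0 0 (by ext <;> simp [ρ])
  have hmid : Tendsto (fun p => ((ρ p).1, (ρ p).2.1, fun j => (Θ (ρ p) j + (ρ p).2.2 j) / 2))
      (𝓝 0) (𝓝 0) :=
    hρ.fst_nhds.prodMk_nhds <| hρ.snd_nhds.fst_nhds.prodMk_nhds <|
      tendsto_half_add (hΘ.comp hρ) hρ.snd_nhds.snd_nhds
  filter_upwards [hρ.eventually hΘeq, hmid.eventually hreal] with p hΘp hrealp
  have h := hΘp.conj_swap hrealp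
  simp only [ρ, conj_conj] at h
  exact h

theorem stmt_6_general (n c : ℕ)
    (φ : ((Fin n → ℂ) × (Fin n → ℂ) × (Fin c → ℂ)) → (Fin c → ℂ))
    (hφ : AnalyticAt ℂ φ 0) (hDφ : fderiv ℂ φ 0 = 0)
    (hreal : ∀ᶠ p in 𝓝 (0 : (Fin n → ℂ) × (Fin n → ℂ) × (Fin c → ℂ)),
      (fun j => conj (φ p j)) =
        φ (fun i => conj (p.2.1 i), fun i => conj (p.1 i), fun j => conj (p.2.2 j)))
    (Θ : ((Fin n → ℂ) × (Fin n → ℂ) × (Fin c → ℂ)) → (Fin c → ℂ))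
    (hΘ : AnalyticAt ℂ Θ 0) (hΘ0 : Θ 0 = 0)
    (hΘeq : ∀ᶠ p in 𝓝 (0 : (Fin n → ℂ) × (Fin n → ℂ) × (Fin c → ℂ)),
      (fun j => (Θ p j - p.2.2 j) / (2 * Complex.I)) =
        φ (p.1, p.2.1, fun j => (Θ p j + p.2.2 j) / 2))
    (Θb : ((Fin n → ℂ) × (Fin n → ℂ) × (Fin c → ℂ)) → (Fin c → ℂ))
    (hΘb : Θb = fun q => fun j =>
      conj (Θ (fun i => conj (q.1 i), fun i => conj (q.2.1 i), fun k => conj (q.2.2 k)) j)) :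
    (∀ᶠ p in 𝓝 (0 : (Fin n → ℂ) × (Fin n → ℂ) × (Fin c → ℂ)),
      p.2.2 = Θ (p.1, p.2.1, Θb (p.2.1, p.1, p.2.2))) ∧
    (∀ᶠ p in 𝓝 (0 : (Fin n → ℂ) × (Fin n → ℂ) × (Fin c → ℂ)),
      p.2.2 = Θb (p.2.1, p.1, Θ (p.1, p.2.1, p.2.2))) := by
  obtain rfl : Θb = conjGerm Θ := hΘb
  have hφ' : HasStrictFDerivAt φ (0 : _ →L[ℂ] _) 0 := hDφ ▸ hφ.hasStrictFDerivAt
  have hΘt : Tendsto Θ (𝓝 0) (𝓝 0) := hΘ0 ▸ hΘ.continuousAt.tendsto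
  have hΘbeq := eventually_complexDefiningEq_conjGerm hreal hΘt hΘeq
  have hz : Tendsto (fun p : (Fin n → ℂ) × (Fin n → ℂ) × (Fin c → ℂ) => p.1) (𝓝 0) (𝓝 0) :=
    tendsto_id.fst_nhds
  have hζ : Tendsto (fun p : (Fin n → ℂ) × (Fin n → ℂ) × (Fin c → ℂ) => p.2.1) (𝓝 0) (𝓝 0) :=
    tendsto_id.snd_nhds.fst_nhds
  have hw : Tendsto (fun p : (Fin n → ℂ) × (Fin n → ℂ) × (Fin c → ℂ) => p.2.2) (𝓝 0) (𝓝 0) :=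
    tendsto_id.snd_nhds.snd_nhds
  have hω := hΘt.conjGerm.comp (hζ.prodMk_nhds (hz.prodMk_nhds hw))
  have hzζω := hz.prodMk_nhds (hζ.prodMk_nhds hω)
  have hzζΘ := hz.prodMk_nhds (hζ.prodMk_nhds hΘt)
  constructor
  · exact ComplexDefiningEq.eventuallyEq_left hφ' hz hζ hw (hΘt.comp hzζω) hω hΘbeq
      (hzζω.eventually hΘeq)
  · exact ComplexDefiningEq.eventuallyEq_right hφ' hz hζ hΘt hw
      (hΘt.conjGerm.comp (hζ.prodMk_nhds (hz.prodMk_nhds hΘt))) hΘeq (hzζΘ.eventually hΘbeq)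

/-- **The two fundamental functional equations.** With `φ` holomorphic near `0`
satisfying `φ(0) = 0`, `Dφ(0) = 0` and the reality condition, `Θ` the holomorphic germ
with `Θ(0) = 0` solving the complexified defining equation, and
`Θ̄(ζ, z, w) := conj (Θ (conj ζ, conj z, conj w))`, one has identically near the origin:
`w = Θ(z, ζ, Θ̄(ζ, z, w))` and `ω = Θ̄(ζ, z, Θ(z, ζ, ω))`. -/
theorem stmt_6 (n c : ℕ) (hn : 1 ≤ n) (hc : 1 ≤ c)
    (φ : ((Fin n → ℂ) × (Fin n → ℂ) × (Fin c → ℂ)) → (Fin c → ℂ))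
    (hφ : AnalyticAt ℂ φ 0) (hφ0 : φ 0 = 0) (hDφ : fderiv ℂ φ 0 = 0)
    (hreal : ∀ᶠ p in 𝓝 (0 : (Fin n → ℂ) × (Fin n → ℂ) × (Fin c → ℂ)),
      (fun j => conj (φ p j)) =
        φ (fun i => conj (p.2.1 i), fun i => conj (p.1 i), fun j => conj (p.2.2 j)))
    (Θ : ((Fin n → ℂ) × (Fin n → ℂ) × (Fin c → ℂ)) → (Fin c → ℂ))
    (hΘ : AnalyticAt ℂ Θ 0) (hΘ0 : Θ 0 = 0)
    (hΘeq : ∀ᶠ p in 𝓝 (0 : (Fin n → ℂ) × (Fin n → ℂ) × (Fin c → ℂ)),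
      (fun j => (Θ p j - p.2.2 j) / (2 * Complex.I)) =
        φ (p.1, p.2.1, fun j => (Θ p j + p.2.2 j) / 2))
    (Θb : ((Fin n → ℂ) × (Fin n → ℂ) × (Fin c → ℂ)) → (Fin c → ℂ))
    (hΘb : Θb = fun q => fun j =>
      conj (Θ (fun i => conj (q.1 i), fun i => conj (q.2.1 i), fun k => conj (q.2.2 k)) j)) :
    (∀ᶠ p in 𝓝 (0 : (Fin n → ℂ) × (Fin n → ℂ) × (Fin c → ℂ)),
      p.2.2 = Θ (p.1, p.2.1, Θb (p.2.1, p.1, p.2.2))) ∧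
    (∀ᶠ p in 𝓝 (0 : (Fin n → ℂ) × (Fin n → ℂ) × (Fin c → ℂ)),
      p.2.2 = Θb (p.2.1, p.1, Θ (p.1, p.2.1, p.2.2))) :=
  stmt_6_general n c φ hφ hDφ hreal Θ hΘ hΘ0 hΘeq Θb hΘb
end

section
/- Let n, c ≥ 1 and let φ : ℂ^n × ℂ^n × ℂ^c → ℂ^c be holomorphic in a neighborhood of the origin with φ(0) = 0, Dφ(0) = 0, satisfying the reality condition conj(φ(z, ζ, ν)) = φ(conj ζ, conj z, conj ν), and let M = {(z, w) : Im w = φ(z, conj z, Re w)} near the origin of ℂ^n × ℂ^c. Then the map Ψ(z', w') := (z', w' + i·φ(0, 0, w')) is a biholomorphism between neighborhoods of the origin of ℂ^n × ℂ^c with Ψ(0) = 0 whose differential at 0 is the identity, and the preimage Ψ^{-1}(M) coincides, near the origin, with a graph {(z', w') : Im w' = φ'(z', conj z', Re w')} for some holomorphic φ' near 0 with φ'(0) = 0, Dφ'(0) = 0, the reality condition, and φ'(0, 0, ν) ≡ 0 for all ν near 0 in ℂ^c. -/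
/-!
Write `w = s + i t` and `ψ = φ(0, 0, ·)`. The condition `Ψ(z, w) ∈ M` reads
`t = φ(z, z̄, s - Im ψ(w)) - Re ψ(w)`. Complexifying (`z̄ ↦ ζ`, and `Re ψ(w)`, `Im ψ(w)` written
through `ψ(s + i t)` and `ψ(s - i t)`, which are conjugate by the reality condition) turns it into a
fixed-point equation `t = R(z, ζ, s, t)` with `R` analytic and flat to second order at `0`, so the
analytic implicit function theorem solves it as `t = φ'(z, ζ, s)`. At `z = ζ = 0, t = 0` the two
values of `ψ` coincide and `R` vanishes, whence `φ'(0, 0, ν) = 0`; `φ'` satisfies the reality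
condition because `R` does and the fixed point is unique. `Ψ` itself is tangent to the identity,
hence a local biholomorphism by the analytic inverse function theorem.
-/

open Complex Filter Topology ComplexConjugate

section LocalInverse

variable {𝕜 : Type*} [NontriviallyNormedField 𝕜]
  {E F G : Type*} [NormedAddCommGroup E] [NormedSpace 𝕜 E]
  [NormedAddCommGroup F] [NormedSpace 𝕜 F] [NormedAddCommGroup G] [NormedSpace 𝕜 G]

theorem HasFDerivAt.comp_zero_of_eq {g : F → G} {f : E → F} {x : E} {y : F}
    (hg : HasFDerivAt g (0 : F →L[𝕜] G) y) (hf : DifferentiableAt 𝕜 f x) (hy : f x = y) :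
    HasFDerivAt (fun x => g (f x)) (0 : E →L[𝕜] G) x := by
  subst hy
  have := hg.comp x hf.hasFDerivAt
  rwa [ContinuousLinearMap.zero_comp] at this

theorem AnalyticAt.exists_openPartialHomeomorph [CompleteSpace E] {f : E → F} {a : E}
    {e : E ≃L[𝕜] F} (hf : AnalyticAt 𝕜 f a) (hd : fderiv 𝕜 f a = e) :
    ∃ Φ : OpenPartialHomeomorph E F, ⇑Φ = f ∧ a ∈ Φ.source ∧ AnalyticAt 𝕜 Φ.symm (f a) := by
  have hs : HasStrictFDerivAt f (e : E →L[𝕜] F) a := hd ▸ hf.hasStrictFDerivAt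
  exact ⟨hs.toOpenPartialHomeomorph f, rfl, hs.mem_toOpenPartialHomeomorph_source,
    (hs.toOpenPartialHomeomorph f).analyticAt_symm' hs.mem_toOpenPartialHomeomorph_source hf hd⟩

theorem AnalyticAt.exists_localInverse_nhds [CompleteSpace E] [CompleteSpace F] {f : E → F}
    {a : E} {e : E ≃L[𝕜] F} (hf : AnalyticAt 𝕜 f a) (hd : fderiv 𝕜 f a = e) :
    ∃ U U', U ∈ 𝓝 a ∧ U' ∈ 𝓝 (f a) ∧ AnalyticOnNhd 𝕜 f U ∧ Set.InjOn f U ∧ f '' U = U' ∧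
      ∃ χ : F → E, AnalyticOnNhd 𝕜 χ U' ∧ ∀ p ∈ U, χ (f p) = p := by
  obtain ⟨Φ, rfl, ha, hχ⟩ := hf.exists_openPartialHomeomorph hd
  set U := Φ.source ∩ Φ ⁻¹' {q | AnalyticAt 𝕜 Φ.symm q} ∩ {p | AnalyticAt 𝕜 Φ p}
  have hUo : IsOpen U :=
    (Φ.isOpen_inter_preimage (isOpen_analyticAt 𝕜 _)).inter (isOpen_analyticAt 𝕜 _)
  have haU : a ∈ U := ⟨⟨ha, hχ⟩, hf⟩
  have hUs : U ⊆ Φ.source := fun p hp => hp.1.1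
  refine ⟨U, Φ '' U, hUo.mem_nhds haU,
    (Φ.isOpen_image_of_subset_source hUo hUs).mem_nhds (Set.mem_image_of_mem Φ haU),
    fun p hp => hp.2, Φ.injOn.mono hUs, rfl, Φ.symm, ?_, fun p hp => Φ.left_inv (hUs hp)⟩
  rintro _ ⟨p, hp, rfl⟩
  exact hp.1.2

theorem AnalyticAt.exists_fixedPoint_graph [CompleteSpace E] [CompleteSpace F] {R : E × F → F}
    (hR : AnalyticAt 𝕜 R 0) (hR0 : R 0 = 0) (hdR : fderiv 𝕜 R 0 = 0) :
    ∃ g : E → F, AnalyticAt 𝕜 g 0 ∧ g 0 = 0 ∧ fderiv 𝕜 g 0 = 0 ∧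
      ∀ᶠ p in 𝓝 0, (R p = p.2 ↔ p.2 = g p.1) := by
  set G : E × F → E × F := fun p => (p.1, p.2 - R p)
  have hG0 : G 0 = 0 := by simp [G, hR0]
  have hdR' : HasFDerivAt R (0 : E × F →L[𝕜] F) 0 := hdR ▸ hR.differentiableAt.hasFDerivAt
  have hdG : fderiv 𝕜 G 0 = ContinuousLinearEquiv.refl 𝕜 (E × F) := by
    have := hasFDerivAt_fst.prodMk (hasFDerivAt_snd.sub hdR')
    simpa using this.fderiv
  have hGa : AnalyticAt 𝕜 G 0 := analyticAt_fst.prod (analyticAt_snd.sub hR)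
  obtain ⟨Θ, hΘ, h0s, hΘa⟩ := hGa.exists_openPartialHomeomorph hdG
  rw [hG0] at hΘa
  have hΘ0 : Θ 0 = 0 := hΘ ▸ hG0
  have h0t : (0 : E × F) ∈ Θ.target := hΘ0 ▸ Θ.map_source h0s
  have hfst : ∀ q ∈ Θ.target, (Θ.symm q).1 = q.1 := fun q hq => by
    conv_rhs => rw [← Θ.right_inv hq, hΘ]
  set g : E → F := fun x => (Θ.symm (x, 0)).2
  have hga : AnalyticAt 𝕜 g 0 :=
    analyticAt_snd.comp (hΘa.fun_comp_of_eq (analyticAt_id.prod analyticAt_const) rfl)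
  have hg0 : g 0 = 0 := by
    simp only [g, Prod.mk_zero_zero]
    conv_lhs => rw [← hΘ0, Θ.left_inv h0s]
    rfl
  have hsol : ∀ᶠ p in 𝓝 0, (R p = p.2 ↔ p.2 = g p.1) := by
    have htarget : ∀ᶠ p : E × F in 𝓝 0, (p.1, (0 : F)) ∈ Θ.target :=
      (continuous_fst.prodMk continuous_const).tendsto' 0 0 rfl |>.eventually
        (Θ.open_target.mem_nhds h0t)
    filter_upwards [Θ.open_source.mem_nhds h0s, htarget] with p hps hpt
    calc R p = p.2 ↔ Θ p = (p.1, 0) := by simp [hΘ, G, Prod.ext_iff, sub_eq_zero, eq_comm]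
      _ ↔ p = Θ.symm (p.1, 0) := (Θ.eq_symm_apply hps hpt).symm
      _ ↔ p.2 = g p.1 := by simp [Prod.ext_iff, g, hfst _ hpt]
  refine ⟨g, hga, hg0, ?_, hsol⟩
  have hgraph : Tendsto (fun x => (x, g x)) (𝓝 0) (𝓝 0) := by
    simpa [hg0, Prod.mk_zero_zero] using (continuousAt_id.prodMk hga.continuousAt).tendsto
  have hflat : HasFDerivAt (fun x => R (x, g x)) (0 : E →L[𝕜] F) 0 :=
    hdR'.comp_zero_of_eq (differentiableAt_id.prodMk hga.differentiableAt) (by simp [hg0])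
  refine (hflat.congr_of_eventuallyEq ?_).fderiv
  filter_upwards [hgraph.eventually hsol] with x hx
  exact (hx.mpr rfl).symm

end LocalInverse

namespace NormalizedGraph

abbrev GraphDomain (n c : ℕ) := (Fin n → ℂ) × (Fin n → ℂ) × (Fin c → ℂ)

variable {n c : ℕ}

def conjSwap (p : GraphDomain n c) : GraphDomain n c := (star p.2.1, star p.1, star p.2.2)

def SatisfiesReality (φ : GraphDomain n c → Fin c → ℂ) : Prop :=
  ∀ᶠ p in 𝓝 0, star (φ p) = φ (conjSwap p)

noncomputable def reVec (w : Fin c → ℂ) : Fin c → ℂ := fun k => ((w k).re : ℂ)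
noncomputable def imVec (w : Fin c → ℂ) : Fin c → ℂ := fun k => ((w k).im : ℂ)

def InGraph (φ : GraphDomain n c → Fin c → ℂ) (zw : (Fin n → ℂ) × (Fin c → ℂ)) : Prop :=
  imVec zw.2 = φ (zw.1, star zw.1, reVec zw.2)

noncomputable def normalizingMap (φ : GraphDomain n c → Fin c → ℂ)
    (p : (Fin n → ℂ) × (Fin c → ℂ)) : (Fin n → ℂ) × (Fin c → ℂ) :=
  (p.1, p.2 + I • φ (0, 0, p.2))

attribute [local fun_prop] analyticAt_fst analyticAt_snd

noncomputable def phiW (φ : GraphDomain n c → Fin c → ℂ) (p : GraphDomain n c × (Fin c → ℂ)) :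
    Fin c → ℂ :=
  φ (0, 0, p.1.2.2 + I • p.2)

noncomputable def phiWbar (φ : GraphDomain n c → Fin c → ℂ) (p : GraphDomain n c × (Fin c → ℂ)) :
    Fin c → ℂ :=
  φ (0, 0, p.1.2.2 - I • p.2)

/- For `p = ((z, ζ, s), t)`, `phiW φ p` and `phiWbar φ p` are `φ(0, 0, w)` and `φ(0, 0, w̄)` for
`w = s + i t`, complexified. On the real slice `ζ = z̄`, `s = Re w`, `t = Im w`, where they are
conjugate by the reality condition, `complexifiedPoint φ p = (z, z̄, Re (w + i φ(0, 0, w)))` and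
the subtracted term is `Re φ(0, 0, w)`; so there `complexifiedRHS φ p = t` says exactly
`InGraph φ (normalizingMap φ (z, w))` (see `inGraph_normalizingMap_iff`). -/
noncomputable def complexifiedPoint (φ : GraphDomain n c → Fin c → ℂ)
    (p : GraphDomain n c × (Fin c → ℂ)) : GraphDomain n c :=
  (p.1.1, p.1.2.1, p.1.2.2 + (I / 2) • (phiW φ p - phiWbar φ p))

noncomputable def complexifiedRHS (φ : GraphDomain n c → Fin c → ℂ)
    (p : GraphDomain n c × (Fin c → ℂ)) : Fin c → ℂ :=
  φ (complexifiedPoint φ p) - (2⁻¹ : ℂ) • (phiW φ p + phiWbar φ p)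

variable {φ : GraphDomain n c → Fin c → ℂ}

lemma complexifiedPoint_zero : complexifiedPoint φ 0 = 0 := by
  simp [complexifiedPoint, phiW, phiWbar]

lemma complexifiedRHS_zeroSection (ν : Fin c → ℂ) : complexifiedRHS φ ((0, 0, ν), 0) = 0 := by
  simp only [complexifiedRHS, complexifiedPoint, phiW, phiWbar, smul_zero, add_zero, sub_zero,
    sub_self]
  rw [← two_smul ℂ, smul_smul, inv_mul_cancel₀ two_ne_zero, one_smul, sub_self]

lemma complexifiedRHS_zero : complexifiedRHS φ 0 = 0 := complexifiedRHS_zeroSection 0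

lemma analyticAt_phiW (hφ : AnalyticAt ℂ φ 0) : AnalyticAt ℂ (phiW φ) 0 :=
  hφ.fun_comp_of_eq (by fun_prop) (by simp)

lemma analyticAt_phiWbar (hφ : AnalyticAt ℂ φ 0) : AnalyticAt ℂ (phiWbar φ) 0 :=
  hφ.fun_comp_of_eq (by fun_prop) (by simp)

lemma hasFDerivAt_phiW (hdφ : HasFDerivAt φ (0 : GraphDomain n c →L[ℂ] Fin c → ℂ) 0) :
    HasFDerivAt (phiW φ) (0 : GraphDomain n c × (Fin c → ℂ) →L[ℂ] Fin c → ℂ) 0 :=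
  hdφ.comp_zero_of_eq (by fun_prop) (by simp)

lemma hasFDerivAt_phiWbar (hdφ : HasFDerivAt φ (0 : GraphDomain n c →L[ℂ] Fin c → ℂ) 0) :
    HasFDerivAt (phiWbar φ) (0 : GraphDomain n c × (Fin c → ℂ) →L[ℂ] Fin c → ℂ) 0 :=
  hdφ.comp_zero_of_eq (by fun_prop) (by simp)

lemma analyticAt_complexifiedRHS (hφ : AnalyticAt ℂ φ 0) :
    AnalyticAt ℂ (complexifiedRHS φ) 0 := by
  have hA := analyticAt_phiW hφ
  have hB := analyticAt_phiWbar hφ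
  have hN : AnalyticAt ℂ (fun p => φ (complexifiedPoint φ p)) 0 :=
    hφ.fun_comp_of_eq (by unfold complexifiedPoint; fun_prop) complexifiedPoint_zero
  exact hN.sub (by fun_prop)

lemma fderiv_complexifiedRHS
    (hdφ : HasFDerivAt φ (0 : GraphDomain n c →L[ℂ] Fin c → ℂ) 0) :
    fderiv ℂ (complexifiedRHS φ) 0 = 0 := by
  have hA := hasFDerivAt_phiW hdφ
  have hB := hasFDerivAt_phiWbar hdφ
  have hA' := hA.differentiableAt
  have hB' := hB.differentiableAt
  have hN : HasFDerivAt (fun p => φ (complexifiedPoint φ p))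
      (0 : GraphDomain n c × (Fin c → ℂ) →L[ℂ] Fin c → ℂ) 0 :=
    hdφ.comp_zero_of_eq (by unfold complexifiedPoint; fun_prop) complexifiedPoint_zero
  have hR := hN.sub ((hA.add hB).const_smul (2⁻¹ : ℂ))
  rw [add_zero, smul_zero, sub_zero] at hR
  exact hR.fderiv

lemma SatisfiesReality.star_complexifiedRHS (hreal : SatisfiesReality φ)
    (hcont : ContinuousAt φ 0) :
    ∀ᶠ p in 𝓝 0, star (complexifiedRHS φ p) = complexifiedRHS φ (conjSwap p.1, star p.2) := by
  have hcA : ContinuousAt (phiW φ) 0 := hcont.comp_of_eq (by fun_prop) (by simp)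
  have hcB : ContinuousAt (phiWbar φ) 0 := hcont.comp_of_eq (by fun_prop) (by simp)
  have tN : Tendsto (complexifiedPoint φ) (𝓝 0) (𝓝 0) := by
    have : ContinuousAt (complexifiedPoint φ) 0 := by unfold complexifiedPoint; fun_prop
    simpa [complexifiedPoint_zero] using this.tendsto
  have tA : Tendsto (fun p : GraphDomain n c × (Fin c → ℂ) =>
      ((0 : Fin n → ℂ), (0 : Fin n → ℂ), p.1.2.2 + I • p.2)) (𝓝 0) (𝓝 0) :=
    (by fun_prop : Continuous _).tendsto' _ _ (by simp)
  have tB : Tendsto (fun p : GraphDomain n c × (Fin c → ℂ) =>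
      ((0 : Fin n → ℂ), (0 : Fin n → ℂ), p.1.2.2 - I • p.2)) (𝓝 0) (𝓝 0) :=
    (by fun_prop : Continuous _).tendsto' _ _ (by simp)
  filter_upwards [tN.eventually hreal, tA.eventually hreal, tB.eventually hreal] with p hN hA hB
  have eA : star (phiW φ p) = phiWbar φ (conjSwap p.1, star p.2) := by
    rw [phiW, hA]; simp [conjSwap, phiWbar, sub_eq_add_neg]
  have eB : star (phiWbar φ p) = phiW φ (conjSwap p.1, star p.2) := by
    rw [phiWbar, hB]; simp [conjSwap, phiW, sub_eq_add_neg]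
  have eN :
      conjSwap (complexifiedPoint φ p) = complexifiedPoint φ (conjSwap p.1, star p.2) := by
    simp only [conjSwap, complexifiedPoint, star_add, star_smul, star_sub, eA, eB]
    have hI : star (I / 2) = -(I / 2) := by simp [neg_div]
    rw [hI, neg_smul, ← smul_neg, neg_sub]
  rw [complexifiedRHS, star_sub, hN, star_smul, star_add, eA, eB, eN, complexifiedRHS, add_comm]
  simp

lemma inGraph_normalizingMap_iff {z : Fin n → ℂ} {w : Fin c → ℂ}
    (hw : star (φ (0, 0, w)) = φ (0, 0, star w)) :
    InGraph φ (normalizingMap φ (z, w)) ↔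
      complexifiedRHS φ ((z, star z, reVec w), imVec w) = imVec w := by
  set a := φ (0, 0, w)
  have hA : phiW φ ((z, star z, reVec w), imVec w) = a := by
    have : reVec w + I • imVec w = w := by
      funext k; apply Complex.ext <;> simp [reVec, imVec]
    simp only [phiW, this, a]
  have hB : phiWbar φ ((z, star z, reVec w), imVec w) = star a := by
    have : reVec w - I • imVec w = star w := by
      funext k; apply Complex.ext <;> simp [reVec, imVec]
    simp only [phiWbar, this, hw, a]
  have hP :
      complexifiedPoint φ ((z, star z, reVec w), imVec w) = (z, star z, reVec (w + I • a)) := by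
    simp only [complexifiedPoint, hA, hB]
    congr 2
    funext k
    apply Complex.ext <;> simp [reVec]
    ring
  have hS : (2⁻¹ : ℂ) • (a + star a) = reVec a := by
    funext k
    apply Complex.ext <;> simp [reVec]
    ring
  have hIm : imVec (w + I • a) = imVec w + reVec a := by
    funext k; apply Complex.ext <;> simp [reVec, imVec]
  rw [complexifiedRHS, hP, hA, hB, hS, sub_eq_iff_eq_add, ← hIm]
  exact eq_comm

lemma normalizingMap_zero (hφ0 : φ 0 = 0) : normalizingMap φ 0 = 0 := by
  simp [normalizingMap, Prod.mk_zero_zero, hφ0]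

lemma analyticAt_normalizingMap (hφ : AnalyticAt ℂ φ 0) : AnalyticAt ℂ (normalizingMap φ) 0 := by
  have : AnalyticAt ℂ (fun p : (Fin n → ℂ) × (Fin c → ℂ) => φ (0, 0, p.2)) 0 :=
    hφ.fun_comp_of_eq (by fun_prop) (by simp)
  unfold normalizingMap
  fun_prop

lemma hasFDerivAt_normalizingMap
    (hdφ : HasFDerivAt φ (0 : GraphDomain n c →L[ℂ] Fin c → ℂ) 0) :
    HasFDerivAt (normalizingMap φ) (ContinuousLinearMap.id ℂ _) 0 := by
  have : HasFDerivAt (fun p : (Fin n → ℂ) × (Fin c → ℂ) => φ (0, 0, p.2)) 0 0 :=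
    hdφ.comp_zero_of_eq (by fun_prop) (by simp)
  have h := hasFDerivAt_fst.prodMk (hasFDerivAt_snd.add (this.const_smul I))
  rw [smul_zero, add_zero, ContinuousLinearMap.fst_prod_snd] at h
  exact h

lemma satisfiesReality_of_fixedPoint
    {R : GraphDomain n c × (Fin c → ℂ) → Fin c → ℂ} {g : GraphDomain n c → Fin c → ℂ}
    (hg : ContinuousAt g 0) (hg0 : g 0 = 0)
    (hR : ∀ᶠ p in 𝓝 0, star (R p) = R (conjSwap p.1, star p.2))
    (hsol : ∀ᶠ p in 𝓝 0, (R p = p.2 ↔ p.2 = g p.1)) : SatisfiesReality g := by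
  have hgraph : Tendsto (fun x => (x, g x)) (𝓝 0) (𝓝 0) := by
    simpa [hg0, Prod.mk_zero_zero] using (continuousAt_id.prodMk hg).tendsto
  have hreflected : Tendsto (fun x => (conjSwap x, star (g x))) (𝓝 0) (𝓝 0) := by
    have : ContinuousAt (fun x => (conjSwap x, star (g x))) 0 := by
      unfold conjSwap; fun_prop
    simpa [hg0, conjSwap, Prod.mk_zero_zero] using this.tendsto
  filter_upwards [hgraph.eventually hsol, hgraph.eventually hR, hreflected.eventually hsol]
    with x hfix hstar hfix'
  exact hfix'.mp (by rw [← hstar, (hfix.mpr rfl)])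

theorem exists_normalized_graphingFunction (hφ : AnalyticAt ℂ φ 0) (hdφ : fderiv ℂ φ 0 = 0)
    (hreal : SatisfiesReality φ) :
    ∃ φ' : GraphDomain n c → Fin c → ℂ, AnalyticAt ℂ φ' 0 ∧ φ' 0 = 0 ∧ fderiv ℂ φ' 0 = 0 ∧
      SatisfiesReality φ' ∧ (∀ᶠ ν in 𝓝 0, φ' (0, 0, ν) = 0) ∧
      ∀ᶠ zw in 𝓝 0, (InGraph φ (normalizingMap φ zw) ↔ InGraph φ' zw) := by
  have hdφ' : HasFDerivAt φ (0 : GraphDomain n c →L[ℂ] Fin c → ℂ) 0 :=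
    hdφ ▸ hφ.differentiableAt.hasFDerivAt
  obtain ⟨g, hga, hg0, hdg, hsol⟩ := (analyticAt_complexifiedRHS hφ).exists_fixedPoint_graph
    complexifiedRHS_zero (fderiv_complexifiedRHS hdφ')
  refine ⟨g, hga, hg0, hdg, satisfiesReality_of_fixedPoint hga.continuousAt hg0
    (hreal.star_complexifiedRHS hφ.continuousAt) hsol, ?_, ?_⟩
  · have hsection : Tendsto (fun ν : Fin c → ℂ =>
        (((0 : Fin n → ℂ), (0 : Fin n → ℂ), ν), (0 : Fin c → ℂ))) (𝓝 0) (𝓝 0) :=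
      (by fun_prop : Continuous _).tendsto' _ _ (by simp)
    filter_upwards [hsection.eventually hsol] with ν hν
    exact (hν.mp (complexifiedRHS_zeroSection ν)).symm
  · have hslice : Tendsto (fun zw : (Fin n → ℂ) × (Fin c → ℂ) =>
        ((zw.1, star zw.1, reVec zw.2), imVec zw.2)) (𝓝 0) (𝓝 0) :=
      (by unfold reVec imVec; fun_prop : Continuous _).tendsto' _ _
        (by ext <;> simp [reVec, imVec])
    have hcenter : Tendsto (fun zw : (Fin n → ℂ) × (Fin c → ℂ) =>
        ((0 : Fin n → ℂ), (0 : Fin n → ℂ), zw.2)) (𝓝 0) (𝓝 0) :=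
      (by fun_prop : Continuous _).tendsto' _ _ (by simp)
    filter_upwards [hslice.eventually hsol, hcenter.eventually hreal] with zw hzw hr
    rw [inGraph_normalizingMap_iff (by simpa [conjSwap] using hr)]
    exact hzw

end NormalizedGraph

theorem stmt_9_general (n c : ℕ)
    (φ : ((Fin n → ℂ) × (Fin n → ℂ) × (Fin c → ℂ)) → (Fin c → ℂ))
    (hφ : AnalyticAt ℂ φ 0) (hφ0 : φ 0 = 0) (hDφ : fderiv ℂ φ 0 = 0)
    (hreal : ∀ᶠ p in 𝓝 (0 : (Fin n → ℂ) × (Fin n → ℂ) × (Fin c → ℂ)),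
      (fun j => conj (φ p j)) =
        φ (fun i => conj (p.2.1 i), fun i => conj (p.1 i), fun j => conj (p.2.2 j)))
    (M : Set ((Fin n → ℂ) × (Fin c → ℂ)))
    (hM : M = {zw | (fun j => ((zw.2 j).im : ℂ)) =
      φ (zw.1, fun i => conj (zw.1 i), fun k => ((zw.2 k).re : ℂ))})
    (Ψ : ((Fin n → ℂ) × (Fin c → ℂ)) → ((Fin n → ℂ) × (Fin c → ℂ)))
    (hΨdef : Ψ = fun p => (p.1, fun j => p.2 j + Complex.I * φ (0, 0, p.2) j)) :
    ∃ U U' : Set ((Fin n → ℂ) × (Fin c → ℂ)), U ∈ 𝓝 0 ∧ U' ∈ 𝓝 0 ∧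
      AnalyticOnNhd ℂ Ψ U ∧
      Ψ 0 = 0 ∧
      fderiv ℂ Ψ 0 = ContinuousLinearMap.id ℂ ((Fin n → ℂ) × (Fin c → ℂ)) ∧
      Set.InjOn Ψ U ∧
      Ψ '' U = U' ∧
      (∃ χ : ((Fin n → ℂ) × (Fin c → ℂ)) → ((Fin n → ℂ) × (Fin c → ℂ)),
        AnalyticOnNhd ℂ χ U' ∧ ∀ p ∈ U, χ (Ψ p) = p) ∧
      ∃ φ' : ((Fin n → ℂ) × (Fin n → ℂ) × (Fin c → ℂ)) → (Fin c → ℂ),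
        AnalyticAt ℂ φ' 0 ∧ φ' 0 = 0 ∧ fderiv ℂ φ' 0 = 0 ∧
        (∀ᶠ p in 𝓝 (0 : (Fin n → ℂ) × (Fin n → ℂ) × (Fin c → ℂ)),
          (fun j => conj (φ' p j)) =
            φ' (fun i => conj (p.2.1 i), fun i => conj (p.1 i), fun j => conj (p.2.2 j))) ∧
        (∀ᶠ ν in 𝓝 (0 : Fin c → ℂ), φ' (0, 0, ν) = 0) ∧
        (∀ᶠ zw in 𝓝 (0 : (Fin n → ℂ) × (Fin c → ℂ)),
          (Ψ zw ∈ M ↔ (fun j => ((zw.2 j).im : ℂ)) =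
            φ' (zw.1, fun i => conj (zw.1 i), fun k => ((zw.2 k).re : ℂ)))) := by
  open NormalizedGraph in
  subst hM hΨdef
  have hdΨ := hasFDerivAt_normalizingMap (hDφ ▸ hφ.differentiableAt.hasFDerivAt)
  obtain ⟨U, U', hU, hU', hΨU, hinj, himage, hχ⟩ :=
    (analyticAt_normalizingMap hφ).exists_localInverse_nhds
      (e := ContinuousLinearEquiv.refl ℂ _) hdΨ.fderiv
  rw [normalizingMap_zero hφ0] at hU'
  obtain ⟨φ', hφ'⟩ := exists_normalized_graphingFunction hφ hDφ hreal
  exact ⟨U, U', hU, hU', hΨU, normalizingMap_zero hφ0, hdΨ.fderiv, hinj, himage, hχ, φ', hφ'⟩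

/-- **Step I normalization.** For the CR-generic graph `M = {Im w = φ(z, conj z, Re w)}`,
the map `Ψ(z', w') = (z', w' + i·φ(0, 0, w'))` is a local biholomorphism fixing `0` with
identity differential at `0`, and `Ψ⁻¹(M)` coincides near the origin with a graph
`{Im w' = φ'(z', conj z', Re w')}` where `φ'` satisfies `φ'(0, 0, ν) ≡ 0`. -/
theorem stmt_9 (n c : ℕ) (hn : 1 ≤ n) (hc : 1 ≤ c)
    (φ : ((Fin n → ℂ) × (Fin n → ℂ) × (Fin c → ℂ)) → (Fin c → ℂ))
    (hφ : AnalyticAt ℂ φ 0) (hφ0 : φ 0 = 0) (hDφ : fderiv ℂ φ 0 = 0)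
    (hreal : ∀ᶠ p in 𝓝 (0 : (Fin n → ℂ) × (Fin n → ℂ) × (Fin c → ℂ)),
      (fun j => conj (φ p j)) =
        φ (fun i => conj (p.2.1 i), fun i => conj (p.1 i), fun j => conj (p.2.2 j)))
    (M : Set ((Fin n → ℂ) × (Fin c → ℂ)))
    (hM : M = {zw | (fun j => ((zw.2 j).im : ℂ)) =
      φ (zw.1, fun i => conj (zw.1 i), fun k => ((zw.2 k).re : ℂ))})
    (Ψ : ((Fin n → ℂ) × (Fin c → ℂ)) → ((Fin n → ℂ) × (Fin c → ℂ)))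
    (hΨdef : Ψ = fun p => (p.1, fun j => p.2 j + Complex.I * φ (0, 0, p.2) j)) :
    ∃ U U' : Set ((Fin n → ℂ) × (Fin c → ℂ)), U ∈ 𝓝 0 ∧ U' ∈ 𝓝 0 ∧
      AnalyticOnNhd ℂ Ψ U ∧
      Ψ 0 = 0 ∧
      fderiv ℂ Ψ 0 = ContinuousLinearMap.id ℂ ((Fin n → ℂ) × (Fin c → ℂ)) ∧
      Set.InjOn Ψ U ∧
      Ψ '' U = U' ∧
      (∃ χ : ((Fin n → ℂ) × (Fin c → ℂ)) → ((Fin n → ℂ) × (Fin c → ℂ)),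
        AnalyticOnNhd ℂ χ U' ∧ ∀ p ∈ U, χ (Ψ p) = p) ∧
      ∃ φ' : ((Fin n → ℂ) × (Fin n → ℂ) × (Fin c → ℂ)) → (Fin c → ℂ),
        AnalyticAt ℂ φ' 0 ∧ φ' 0 = 0 ∧ fderiv ℂ φ' 0 = 0 ∧
        (∀ᶠ p in 𝓝 (0 : (Fin n → ℂ) × (Fin n → ℂ) × (Fin c → ℂ)),
          (fun j => conj (φ' p j)) =
            φ' (fun i => conj (p.2.1 i), fun i => conj (p.1 i), fun j => conj (p.2.2 j))) ∧
        (∀ᶠ ν in 𝓝 (0 : Fin c → ℂ), φ' (0, 0, ν) = 0) ∧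
        (∀ᶠ zw in 𝓝 (0 : (Fin n → ℂ) × (Fin c → ℂ)),
          (Ψ zw ∈ M ↔ (fun j => ((zw.2 j).im : ℂ)) =
            φ' (zw.1, fun i => conj (zw.1 i), fun k => ((zw.2 k).re : ℂ)))) :=
  stmt_9_general n c φ hφ hφ0 hDφ hreal M hM Ψ hΨdef
end

section
/- Let 𝕂 be ℝ or ℂ, let N ≥ 1 and let F : 𝕂^N → 𝕂 be analytic at the origin. Then there exist functions F_1, …, F_N, with F_k : 𝕂^k → 𝕂 analytic at the origin for each k, such that F(x_1, …, x_N) = F(0) + Σ_{k=1}^N x_k·F_k(x_1, …, x_k) for all x in a neighborhood of the origin of 𝕂^N. -/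
/-!
For each `k`, the difference `F(x₁, …, x_k, 0, …) - F(x₁, …, x_{k-1}, 0, …)` is analytic in
`(x₁, …, x_k)` and vanishes on `x_k = 0`, hence is `x_k` times an analytic function `F_k`;
summing over `k` telescopes to `F(x) - F(0)`.

The division by the last variable is done on Taylor series. For `y = (x, t)` write
`y = P y + t e` with `P y = (x, 0)` and `e = (0, 1)`. Since `f` vanishes on `t = 0`, so does every
`pₙ(Py, …, Py)`, and multilinearity telescopes `pₙ₊₁(y, …, y)` into
`t • Σᵢ pₙ₊₁(Py, …, Py, e, y, …, y)`. These new coefficients have norm at most `(n + 1) ‖pₙ₊₁‖`,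
so the quotient series still converges near `0`.
-/

open Filter Topology

theorem MultilinearMap.map_const_sub_map_const {R M N : Type*} [CommRing R] [AddCommGroup M]
    [Module R M] [AddCommGroup N] [Module R N] {n : ℕ}
    (f : MultilinearMap R (fun _ : Fin (n + 1) => M) N) (u v : M) :
    f (fun _ => v) - f (fun _ => u) =
      ∑ i : Fin (n + 1), f (i.insertNth (v - u) fun j => if j.castSucc < i then u else v) := by
  set A : ℕ → N := fun t => f fun j => if (j : ℕ) < t then u else v
  have hterm (i : Fin (n + 1)) :
      f (i.insertNth (v - u) fun j => if j.castSucc < i then u else v) = A i - A (i + 1) := by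
    have hv : A i = f (i.insertNth v fun j => if j.castSucc < i then u else v) := by
      simp only [A]; congr 1; funext j; cases j using Fin.succAboveCases i <;>
        simp [Fin.succAbove_lt_iff_castSucc_lt]
    have hu : A (i + 1) = f (i.insertNth u fun j => if j.castSucc < i then u else v) := by
      simp only [A]; congr 1; funext j; cases j using Fin.succAboveCases i <;>
        simp [(Fin.succAbove_ne _ _).le_iff_lt, Fin.succAbove_lt_iff_castSucc_lt]
    rw [hv, hu, eq_sub_iff_add_eq, ← f.map_insertNth_add, sub_add_cancel]
  rw [Finset.sum_congr rfl fun i _ => hterm i, Fin.sum_univ_eq_sum_range (fun t => A t - A (t + 1)),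
    Finset.sum_range_sub']
  simp [A, Fin.is_le]

section DivisionBySnd

variable {𝕜 E F : Type*} [NontriviallyNormedField 𝕜] [NormedAddCommGroup E] [NormedSpace 𝕜 E]
  [NormedAddCommGroup F] [NormedSpace 𝕜 F]

namespace FormalMultilinearSeries

theorem radius_le_radius_of_norm_le_mul_succ {p q : FormalMultilinearSeries 𝕜 E F}
    (h : ∀ n, ‖q n‖ ≤ (n + 1) * ‖p (n + 1)‖) : p.radius ≤ q.radius := by
  refine ENNReal.le_of_forall_nnreal_lt fun r hr => ?_
  obtain ⟨r', hrr', hr'⟩ := ENNReal.lt_iff_exists_nnreal_btwn.1 hr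
  replace hrr' : (r : ℝ) < r' := by exact_mod_cast hrr'
  have hr'0 : (0 : ℝ) < r' := r.2.trans_lt hrr'
  obtain ⟨C, -, hC⟩ := p.norm_mul_pow_le_of_lt_radius hr'
  have hgeom := summable_choose_mul_geometric_of_norm_lt_one 1 (r := (r / r' : ℝ))
    (by rw [Real.norm_of_nonneg (by positivity)]; exact (div_lt_one hr'0).2 hrr')
  refine q.le_radius_of_summable (.of_nonneg_of_le (fun n => by positivity) (fun n => ?_)
    (hgeom.mul_left (C / r')))
  calc ‖q n‖ * (r : ℝ) ^ n ≤ (n + 1) * ‖p (n + 1)‖ * (r : ℝ) ^ n := by gcongr; exact h n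
    _ = (n + 1) * (‖p (n + 1)‖ * (r' : ℝ) ^ (n + 1)) / r' * (r / r' : ℝ) ^ n := by
      rw [div_pow, pow_succ]
      field_simp
    _ ≤ (n + 1) * C / r' * (r / r' : ℝ) ^ n := by gcongr; exact hC _
    _ = C / r' * ((n + 1).choose 1 * (r / r' : ℝ) ^ n) := by
      rw [Nat.choose_one_right]; push_cast; ring

/-- The Taylor series of `f (x, t) / t` when `p` is that of a function `f` vanishing on `t = 0`. -/
noncomputable def divSnd (p : FormalMultilinearSeries 𝕜 (E × 𝕜) F) :
    FormalMultilinearSeries 𝕜 (E × 𝕜) F := fun m =>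
  ∑ i : Fin (m + 1), ((p (m + 1)).curryMid i ((0 : E), (1 : 𝕜))).compContinuousLinearMap
    fun j => if j.castSucc < i
      then (ContinuousLinearMap.inl 𝕜 E 𝕜).comp (ContinuousLinearMap.fst 𝕜 E 𝕜)
      else ContinuousLinearMap.id 𝕜 (E × 𝕜)

theorem norm_divSnd_le (p : FormalMultilinearSeries 𝕜 (E × 𝕜) F) (m : ℕ) :
    ‖p.divSnd m‖ ≤ (m + 1) * ‖p (m + 1)‖ := by
  have hP : ‖(ContinuousLinearMap.inl 𝕜 E 𝕜).comp (ContinuousLinearMap.fst 𝕜 E 𝕜)‖ ≤ 1 :=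
    ContinuousLinearMap.opNorm_le_bound _ zero_le_one fun y => by simp [Prod.norm_def]
  refine (norm_sum_le _ _).trans ?_
  calc _ ≤ ∑ _i : Fin (m + 1), ‖p (m + 1)‖ := Finset.sum_le_sum fun i _ => by
        refine (ContinuousMultilinearMap.norm_compContinuousLinearMap_le _ _).trans ?_
        refine (mul_le_mul ?_ ?_ (by positivity) (norm_nonneg _)).trans_eq (mul_one _)
        · refine ((p (m + 1)).curryMid i).le_opNorm _ |>.trans ?_
          simp [ContinuousMultilinearMap.norm_curryMid, Prod.norm_def]
        · refine Finset.prod_le_one (fun _ _ => norm_nonneg _) fun j _ => ?_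
          split_ifs
          exacts [hP, ContinuousLinearMap.norm_id_le]
    _ = (m + 1) * ‖p (m + 1)‖ := by simp

theorem snd_smul_divSnd_apply {p : FormalMultilinearSeries 𝕜 (E × 𝕜) F} {m : ℕ}
    (hp : ∀ x : E, p (m + 1) (fun _ => (x, 0)) = 0) (y : E × 𝕜) :
    y.2 • p.divSnd m (fun _ => y) = p (m + 1) (fun _ => y) := by
  have hy : y.2 • ((0 : E), (1 : 𝕜)) = y - (y.1, 0) := by ext <;> simp
  have key := (p (m + 1)).toMultilinearMap.map_const_sub_map_const (y.1, 0) y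
  rw [← hy] at key
  simp only [ContinuousMultilinearMap.coe_coe, hp, sub_zero,
    (p (m + 1)).toMultilinearMap.map_insertNth_smul] at key
  simp only [divSnd, sum_apply, Finset.smul_sum,
    ContinuousMultilinearMap.compContinuousLinearMap_apply,
    ContinuousMultilinearMap.curryMid_apply]
  rw [key]
  refine Finset.sum_congr rfl fun i _ => ?_
  congr 3; funext j
  split_ifs <;> rfl

end FormalMultilinearSeries

theorem AnalyticAt.exists_eq_snd_smul [CompleteSpace F] {f : E × 𝕜 → F} (hf : AnalyticAt 𝕜 f 0)
    (h0 : ∀ᶠ x in 𝓝 0, f (x, 0) = 0) :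
    ∃ g : E × 𝕜 → F, AnalyticAt 𝕜 g 0 ∧ ∀ᶠ y in 𝓝 0, f y = y.2 • g y := by
  obtain ⟨p, hp⟩ := hf
  set P := (ContinuousLinearMap.inl 𝕜 E 𝕜).comp (ContinuousLinearMap.fst 𝕜 E 𝕜)
  have hfP : HasFPowerSeriesAt (f ∘ P) (p.compContinuousLinearMap P) 0 :=
    HasFPowerSeriesAt.compContinuousLinearMap (by rwa [map_zero])
  have hvanish : f ∘ P =ᶠ[𝓝 0] 0 := (continuous_fst.tendsto (0 : E × 𝕜)).eventually h0
  have hp0 (n : ℕ) (x : E) : p n (fun _ => (x, 0)) = 0 :=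
    (hfP.congr hvanish).apply_eq_zero n (x, 0)
  have hq : HasFPowerSeriesOnBall p.divSnd.sum p.divSnd 0 p.divSnd.radius :=
    p.divSnd.hasFPowerSeriesOnBall (hp.radius_pos.trans_le
      (FormalMultilinearSeries.radius_le_radius_of_norm_le_mul_succ p.norm_divSnd_le))
  refine ⟨p.divSnd.sum, hq.analyticAt, ?_⟩
  filter_upwards [hp.eventually_hasSum, Metric.eball_mem_nhds 0 hq.r_pos] with y hfy hy
  have hsucc : HasSum (fun n => p (n + 1) (fun _ => y)) (y.2 • p.divSnd.sum y) := by
    simpa only [FormalMultilinearSeries.snd_smul_divSnd_apply (hp0 _)]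
      using (p.divSnd.hasSum hy).const_smul y.2
  have hconst : p 0 (fun _ => y) = 0 := by
    rw [← hp0 0 y.1]; exact congrArg _ (Subsingleton.elim _ _)
  have hall := (hasSum_nat_add_iff (f := fun n => p n fun _ => y) 1).1 hsucc
  rw [Finset.sum_range_one, hconst, add_zero] at hall
  rw [zero_add] at hfy
  exact hfy.unique hall

end DivisionBySnd

namespace ProgressiveFactorization

variable {R : Type*} [Zero R] {N : ℕ}

def trunc (t : ℕ) (x : Fin N → R) : Fin N → R := fun j => if (j : ℕ) < t then x j else 0

def extend (k : Fin N) (z : (Fin k → R) × R) : Fin N → R := fun j =>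
  if h : (j : ℕ) < k then z.1 ⟨j, h⟩ else if j = k then z.2 else 0

theorem trunc_self (x : Fin N → R) : trunc N x = x := funext fun j => if_pos j.isLt

theorem trunc_zero (x : Fin N → R) : trunc 0 x = 0 := funext fun j => if_neg j.val.not_lt_zero

theorem extend_prefix (k : Fin N) (x : Fin N → R) :
    extend k (fun i : Fin k => x ⟨i, i.2.trans k.2⟩, x k) = trunc (k + 1) x := by
  funext j
  rcases lt_trichotomy j k with h | rfl | h
  · simp [extend, trunc, Fin.lt_def.1 h, Nat.lt_succ_of_lt (Fin.lt_def.1 h)]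
  · simp [extend, trunc]
  · simp [extend, trunc, h.ne', (Fin.lt_def.1 h).not_gt, Nat.not_lt.2 (Fin.lt_def.1 h)]

theorem extend_prefix_zero (k : Fin N) (x : Fin N → R) :
    extend k (fun i : Fin k => x ⟨i, i.2.trans k.2⟩, 0) = trunc k x := by
  funext j
  rcases lt_trichotomy j k with h | rfl | h
  · simp [extend, trunc, Fin.lt_def.1 h]
  · simp [extend, trunc]
  · simp [extend, trunc, h.ne', (Fin.lt_def.1 h).not_gt]

theorem analyticAt_extend {𝕜 : Type*} [NontriviallyNormedField 𝕜] (k : Fin N)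
    (z : (Fin k → 𝕜) × 𝕜) : AnalyticAt 𝕜 (extend k) z := by
  refine AnalyticAt.pi fun j => ?_
  unfold extend
  split_ifs
  exacts [((ContinuousLinearMap.proj (R := 𝕜) (φ := fun _ : Fin k => 𝕜) _).analyticAt _).comp
    analyticAt_fst, analyticAt_snd, analyticAt_const]

theorem analyticAt_init_last {𝕜 : Type*} [NontriviallyNormedField 𝕜] {n : ℕ}
    (y : Fin (n + 1) → 𝕜) :
    AnalyticAt 𝕜 (fun v : Fin (n + 1) → 𝕜 => (Fin.init v, v (Fin.last n))) y := by
  have hproj (i : Fin (n + 1)) : AnalyticAt 𝕜 (fun v : Fin (n + 1) → 𝕜 => v i) y :=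
    (ContinuousLinearMap.proj (R := 𝕜) (φ := fun _ : Fin (n + 1) => 𝕜) i).analyticAt y
  exact (AnalyticAt.pi fun i : Fin n => hproj i.castSucc).prod (hproj (Fin.last n))

end ProgressiveFactorization

open ProgressiveFactorization

theorem stmt_11_general (𝕂 : Type) [RCLike 𝕂] (N : ℕ)
    (F : (Fin N → 𝕂) → 𝕂) (hF : AnalyticAt 𝕂 F 0) :
    ∃ Fk : (k : Fin N) → ((Fin (k.1 + 1) → 𝕂) → 𝕂),
      (∀ k, AnalyticAt 𝕂 (Fk k) 0) ∧
      ∀ᶠ x in 𝓝 (0 : Fin N → 𝕂),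
        F x = F 0 + ∑ k : Fin N, x k * Fk k (fun i => x (Fin.castLE k.isLt i)) := by
  have hdiv (k : Fin N) : ∃ g : (Fin k → 𝕂) × 𝕂 → 𝕂, AnalyticAt 𝕂 g 0 ∧
      ∀ᶠ z in 𝓝 0, F (extend k z) - F (extend k (z.1, 0)) = z.2 • g z := by
    have hFk : AnalyticAt 𝕂 (fun z => F (extend k z)) 0 :=
      hF.comp_of_eq (analyticAt_extend k 0) (by funext j; simp [extend])
    exact AnalyticAt.exists_eq_snd_smul
      (hFk.sub (hFk.comp_of_eq (analyticAt_fst.prod analyticAt_const) rfl))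
      (.of_forall fun _ => sub_self _)
  choose g hg hgF using hdiv
  refine ⟨fun k y => g k (Fin.init y, y (Fin.last k)),
    fun k => (hg k).comp_of_eq (analyticAt_init_last 0) rfl, ?_⟩
  have hprefix (k : Fin N) : Tendsto (fun x : Fin N → 𝕂 =>
      ((fun i : Fin k => x ⟨i, i.2.trans k.2⟩), x k)) (𝓝 0) (𝓝 0) :=
    ((continuous_pi fun i => continuous_apply _).prodMk (continuous_apply k)).tendsto' 0 0 rfl
  filter_upwards [eventually_all.2 fun k => (hprefix k).eventually (hgF k)] with x hx
  have hterm (k : Fin N) : x k * g k (Fin.init (fun i => x (Fin.castLE k.isLt i)),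
      x (Fin.castLE k.isLt (Fin.last k))) =
      F (trunc (k + 1) x) - F (trunc k x) := by
    rw [← extend_prefix, ← extend_prefix_zero]
    exact (hx k).symm
  simp only [hterm]
  rw [Fin.sum_univ_eq_sum_range (fun t => F (trunc (t + 1) x) - F (trunc t x)),
    Finset.sum_range_sub (fun t => F (trunc t x)), trunc_self, trunc_zero, add_sub_cancel]

/-- **Progressive factorization of a convergent power series.** An analytic germ
`F : 𝕂^N → 𝕂` at the origin (`𝕂 = ℝ` or `ℂ`) can be written
`F(x₁, …, x_N) = F(0) + Σ_{k=1}^N x_k·F_k(x₁, …, x_k)` with each `F_k` analytic at the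
origin and depending only on the first `k` variables. -/
theorem stmt_11 (𝕂 : Type) [RCLike 𝕂] (N : ℕ) (hN : 1 ≤ N)
    (F : (Fin N → 𝕂) → 𝕂) (hF : AnalyticAt 𝕂 F 0) :
    ∃ Fk : (k : Fin N) → ((Fin (k.1 + 1) → 𝕂) → 𝕂),
      (∀ k, AnalyticAt 𝕂 (Fk k) 0) ∧
      ∀ᶠ x in 𝓝 (0 : Fin N → 𝕂),
        F x = F 0 + ∑ k : Fin N, x k * Fk k (fun i => x (Fin.castLE k.isLt i)) :=
  stmt_11_general 𝕂 N F hF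
end
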